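/- Fix Ã > 0 and C₁ > 0, let ψ(x) = [log((|x|²+1)^{1/2}) + 1]², χ(t,x) = exp[(C₁(T−t)+Ã)ψ(x)], and t₁ = max(T − Ã/C₁, 0). Then there exists a constant C > 0 depending only on à (in particular independent of C₁) such that for all t ∈ [t₁,T] and x ∈ ℝⁿ: |Dχ(t,x)| ≤ C·χ(t,x)·ψ(x)^{1/2}/(|x|²+1)^{1/2} and |D²χ(t,x)| ≤ C·χ(t,x)·ψ(x)/(|x|²+1), where D and D² denote the gradient and Hessian in the x-variable. -/

import Mathlib

noncomputable section

/-- The Euclidean state space `ℝⁿ`. -/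
abbrev Eucl (n : ℕ) := EuclideanSpace ℝ (Fin n)

/-- `ψ(x) = [log((|x|²+1)^{1/2}) + 1]²`. -/
def psiFun {n : ℕ} (x : Eucl n) : ℝ :=
  (Real.log ((‖x‖ ^ 2 + 1) ^ ((1 : ℝ) / 2)) + 1) ^ 2

/-- `χ(t,x) = exp[(C₁(T−t)+Ã)ψ(x)]`. -/
def chiFun {n : ℕ} (T C₁ A : ℝ) (t : ℝ) (x : Eucl n) : ℝ :=
  Real.exp ((C₁ * (T - t) + A) * psiFun x)

namespace ChiAux

def L (s : ℝ) : ℝ := 1 / 2 * Real.log (s + 1) + 1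
def g (a s : ℝ) : ℝ := Real.exp (a * L s ^ 2)
def g1 (a s : ℝ) : ℝ := a * L s / (s + 1) * g a s
def g2 (a s : ℝ) : ℝ := g a s / (s + 1) ^ 2 * (a * (1 / 2 - L s + a * L s ^ 2))

lemma hasDerivAt_L {s : ℝ} (hs : s + 1 ≠ 0) :
    HasDerivAt L (1 / (2 * (s + 1))) s := by
  have h1 : HasDerivAt (fun s : ℝ => s + 1) 1 s := (hasDerivAt_id s).add_const 1
  have h2 : HasDerivAt (fun s : ℝ => Real.log (s + 1)) ((s + 1)⁻¹ * 1) s :=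
    by have := (Real.hasDerivAt_log hs).comp s h1; exact this
  have h3 := (h2.const_mul (1 / 2 : ℝ)).add_const 1
  refine h3.congr_deriv ?_
  field_simp

lemma hasDerivAt_g (a : ℝ) {s : ℝ} (hs : s + 1 ≠ 0) :
    HasDerivAt (g a) (g1 a s) s := by
  have h := (((hasDerivAt_L hs).pow 2).const_mul a).exp
  refine h.congr_deriv ?_
  unfold g1 g
  rw [Pi.pow_apply]
  field_simp
  ring

lemma hasDerivAt_g1 (a : ℝ) {s : ℝ} (hs : s + 1 ≠ 0) :
    HasDerivAt (g1 a) (g2 a s) s := by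
  have h1 : HasDerivAt (fun s : ℝ => s + 1) 1 s := (hasDerivAt_id s).add_const 1
  have hq : HasDerivAt (fun s => a * L s / (s + 1))
      ((a * (1 / (2 * (s + 1))) * (s + 1) - a * L s * 1) / (s + 1) ^ 2) s :=
    (((hasDerivAt_L hs).const_mul a)).div h1 hs
  have h := hq.mul (hasDerivAt_g a hs)
  refine h.congr_deriv ?_
  unfold g2 g1
  field_simp

lemma L_one_le {s : ℝ} (hs : 0 ≤ s) : 1 ≤ L s := by
  have : 0 ≤ Real.log (s + 1) := Real.log_nonneg (by linarith)
  unfold L; linarith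

lemma g_pos (a s : ℝ) : 0 < g a s := Real.exp_pos _

lemma g1_pos {a s : ℝ} (ha : 0 < a) (hs : 0 ≤ s) : 0 < g1 a s := by
  have hL := L_one_le hs
  have hg := g_pos a s
  unfold g1
  positivity

/-- arithmetic bound used for the gradient estimate -/
lemma bound1 {A a r : ℝ} (hA : 0 < A) (haA : A ≤ a) (ha2 : a ≤ 2 * A) (hr : 0 ≤ r) :
    |g1 a (r ^ 2)| * (2 * r)
      ≤ (16 * A ^ 2 + 16 * A) * g a (r ^ 2) * L (r ^ 2) / Real.sqrt (r ^ 2 + 1) := by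
  have ha0 : 0 < a := lt_of_lt_of_le hA haA
  have hs0 : (0 : ℝ) ≤ r ^ 2 := sq_nonneg r
  have hu0 : (0 : ℝ) < r ^ 2 + 1 := by positivity
  obtain ⟨Lv, hLv⟩ : ∃ Lv, Lv = L (r ^ 2) := ⟨_, rfl⟩
  obtain ⟨G, hG⟩ : ∃ G, G = g a (r ^ 2) := ⟨_, rfl⟩
  have hL1 : 1 ≤ Lv := hLv ▸ L_one_le hs0
  have hG0 : 0 < G := hG ▸ g_pos a (r ^ 2)
  have hgpos := g1_pos ha0 hs0
  rw [abs_of_pos hgpos]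
  have hg1eq : g1 a (r ^ 2) = a * Lv / (r ^ 2 + 1) * G := by rw [g1, hLv, hG]
  have hsq : Real.sqrt (r ^ 2 + 1) * Real.sqrt (r ^ 2 + 1) = r ^ 2 + 1 :=
    Real.mul_self_sqrt hu0.le
  have hsqpos : 0 < Real.sqrt (r ^ 2 + 1) := Real.sqrt_pos.mpr hu0
  have hrs : r ≤ Real.sqrt (r ^ 2 + 1) := by
    nlinarith [Real.sq_sqrt hu0.le, Real.sqrt_nonneg (r ^ 2 + 1)]
  have hru : r * Real.sqrt (r ^ 2 + 1) ≤ r ^ 2 + 1 := by nlinarith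
  rw [hg1eq, ← hLv, ← hG]
  rw [show a * Lv / (r ^ 2 + 1) * G * (2 * r) = 2 * a * Lv * G * r / (r ^ 2 + 1) by ring]
  rw [div_le_div_iff₀ hu0 hsqpos]
  have h2aC : 2 * a ≤ 16 * A ^ 2 + 16 * A := by nlinarith
  calc 2 * a * Lv * G * r * Real.sqrt (r ^ 2 + 1)
      = (2 * a) * (Lv * G) * (r * Real.sqrt (r ^ 2 + 1)) := by ring
    _ ≤ (2 * a) * (Lv * G) * (r ^ 2 + 1) := by
        have hum : 0 ≤ (2 * a) * (Lv * G) := by positivity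
        exact mul_le_mul_of_nonneg_left hru hum
    _ ≤ (16 * A ^ 2 + 16 * A) * (Lv * G) * (r ^ 2 + 1) := by
        have : 0 ≤ (Lv * G) * (r ^ 2 + 1) := by positivity
        nlinarith
    _ = (16 * A ^ 2 + 16 * A) * G * Lv * (r ^ 2 + 1) := by ring

/-- arithmetic bound used for the Hessian estimate -/
lemma bound2 {A a r : ℝ} (hA : 0 < A) (haA : A ≤ a) (ha2 : a ≤ 2 * A) (hr : 0 ≤ r) :
    2 * |g1 a (r ^ 2)| + 4 * |g2 a (r ^ 2)| * r ^ 2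
      ≤ (16 * A ^ 2 + 16 * A) * g a (r ^ 2) * L (r ^ 2) ^ 2 / (r ^ 2 + 1) := by
  have ha0 : 0 < a := lt_of_lt_of_le hA haA
  have hs0 : (0 : ℝ) ≤ r ^ 2 := sq_nonneg r
  have hu0 : (0 : ℝ) < r ^ 2 + 1 := by positivity
  obtain ⟨Lv, hLv⟩ : ∃ Lv, Lv = L (r ^ 2) := ⟨_, rfl⟩
  obtain ⟨G, hG⟩ : ∃ G, G = g a (r ^ 2) := ⟨_, rfl⟩
  have hL1 : 1 ≤ Lv := hLv ▸ L_one_le hs0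
  have hG0 : 0 < G := hG ▸ g_pos a (r ^ 2)
  have hgpos := g1_pos ha0 hs0
  have hg1eq : g1 a (r ^ 2) = a * Lv / (r ^ 2 + 1) * G := by rw [g1, hLv, hG]
  -- bound on |g2|
  have hg2le : |g2 a (r ^ 2)| ≤ G / (r ^ 2 + 1) ^ 2 * (a * (Lv + a * Lv ^ 2)) := by
    have heq : g2 a (r ^ 2) = G / (r ^ 2 + 1) ^ 2 * (a * (1 / 2 - Lv + a * Lv ^ 2)) := by
      rw [g2, hLv, hG]
    rw [heq, abs_mul, abs_mul]
    have h1 : |G / (r ^ 2 + 1) ^ 2| = G / (r ^ 2 + 1) ^ 2 := abs_of_pos (by positivity)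
    have h1' : |a| = a := abs_of_pos ha0
    rw [h1, h1']
    have habs : |1 / 2 - Lv + a * Lv ^ 2| ≤ Lv + a * Lv ^ 2 := by
      have h := abs_add_le (1 / 2 - Lv) (a * Lv ^ 2)
      have h2 : |1 / 2 - Lv| ≤ Lv := by
        rw [abs_sub_comm, abs_of_nonneg (by linarith)]; linarith
      have h3 : |a * Lv ^ 2| = a * Lv ^ 2 := abs_of_pos (by positivity)
      linarith
    gcongr
  rw [abs_of_pos hgpos, hg1eq, ← hLv, ← hG]
  have key : 2 * (a * Lv / (r ^ 2 + 1) * G) + 4 * (G / (r ^ 2 + 1) ^ 2 * (a * (Lv + a * Lv ^ 2))) * r ^ 2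
      ≤ (16 * A ^ 2 + 16 * A) * G * Lv ^ 2 / (r ^ 2 + 1) := by
    have hlhs : 2 * (a * Lv / (r ^ 2 + 1) * G) + 4 * (G / (r ^ 2 + 1) ^ 2 * (a * (Lv + a * Lv ^ 2))) * r ^ 2
        = (2 * a * Lv * G * (r ^ 2 + 1) + 4 * G * a * (Lv + a * Lv ^ 2) * r ^ 2) / (r ^ 2 + 1) ^ 2 := by
      field_simp
    rw [hlhs, div_le_div_iff₀ (by positivity) hu0]
    have hsu : (r ^ 2 : ℝ) ≤ r ^ 2 + 1 := by linarith
    have hLsq : Lv ≤ Lv ^ 2 := by nlinarith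
    have h6 : 6 * a + 4 * a ^ 2 ≤ 16 * A ^ 2 + 16 * A := by nlinarith
    have inner : 2 * a * Lv * G * (r ^ 2 + 1) + 4 * G * a * (Lv + a * Lv ^ 2) * r ^ 2
        ≤ (16 * A ^ 2 + 16 * A) * G * Lv ^ 2 * (r ^ 2 + 1) := by
      nlinarith [mul_le_mul_of_nonneg_left hLsq (show (0:ℝ) ≤ 2 * a * G * (r ^ 2 + 1) by positivity),
        mul_le_mul_of_nonneg_left hsu (show (0:ℝ) ≤ 4 * G * a * Lv by positivity),
        mul_le_mul_of_nonneg_left hsu (show (0:ℝ) ≤ 4 * G * a ^ 2 * Lv ^ 2 by positivity),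
        mul_le_mul_of_nonneg_left hLsq (show (0:ℝ) ≤ 4 * a * G * (r ^ 2 + 1) by positivity),
        mul_le_mul_of_nonneg_left h6 (show (0:ℝ) ≤ G * Lv ^ 2 * (r ^ 2 + 1) by positivity)]
    calc (2 * a * Lv * G * (r ^ 2 + 1) + 4 * G * a * (Lv + a * Lv ^ 2) * r ^ 2) * (r ^ 2 + 1)
        ≤ ((16 * A ^ 2 + 16 * A) * G * Lv ^ 2 * (r ^ 2 + 1)) * (r ^ 2 + 1) := by
          exact mul_le_mul_of_nonneg_right inner hu0.le
      _ = (16 * A ^ 2 + 16 * A) * G * Lv ^ 2 * (r ^ 2 + 1) ^ 2 := by ring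
  calc 2 * (a * Lv / (r ^ 2 + 1) * G) + 4 * |g2 a (r ^ 2)| * r ^ 2
      ≤ 2 * (a * Lv / (r ^ 2 + 1) * G) + 4 * (G / (r ^ 2 + 1) ^ 2 * (a * (Lv + a * Lv ^ 2))) * r ^ 2 := by
        gcongr
    _ ≤ (16 * A ^ 2 + 16 * A) * G * Lv ^ 2 / (r ^ 2 + 1) := key

def J (n : ℕ) : Eucl n →L[ℝ] Eucl n →L[ℝ] ℝ := innerSL ℝ

@[simp] lemma J_apply {n : ℕ} (x v : Eucl n) : J n x v = inner ℝ x v := rfl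

lemma norm_J_apply {n : ℕ} (x : Eucl n) : ‖J n x‖ = ‖x‖ := innerSL_apply_norm (𝕜 := ℝ) x

lemma hasFDerivAt_nsq {n : ℕ} (x : Eucl n) :
    HasFDerivAt (fun y : Eucl n => ‖y‖ ^ 2) (2 • innerSL ℝ x) x :=
  (hasStrictFDerivAt_norm_sq x).hasFDerivAt

lemma hasFDerivAt_chi {n : ℕ} (a : ℝ) (x : Eucl n) :
    HasFDerivAt (fun y : Eucl n => g a (‖y‖ ^ 2))
      (g1 a (‖x‖ ^ 2) • (2 • innerSL ℝ x)) x := by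
  have hs : (‖x‖ ^ 2 : ℝ) + 1 ≠ 0 := by positivity
  exact (hasDerivAt_g a hs).comp_hasFDerivAt (f := fun y : Eucl n => ‖y‖ ^ 2) x (hasFDerivAt_nsq x)

lemma fderiv_chi_eq {n : ℕ} (a : ℝ) :
    (fderiv ℝ fun y : Eucl n => g a (‖y‖ ^ 2))
      = fun y : Eucl n => (2 * g1 a (‖y‖ ^ 2)) • J n y := by
  funext y
  rw [(hasFDerivAt_chi a y).fderiv]
  ext v
  simp [two_smul]
  ring

lemma hasFDerivAt_chi2 {n : ℕ} (a : ℝ) (x : Eucl n) :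
    HasFDerivAt (fun y : Eucl n => (2 * g1 a (‖y‖ ^ 2)) • J n y)
      ((2 * g1 a (‖x‖ ^ 2)) • J n
        + (((2 * g2 a (‖x‖ ^ 2)) • (2 • innerSL ℝ x)).smulRight (J n x))) x := by
  have hs : (‖x‖ ^ 2 : ℝ) + 1 ≠ 0 := by positivity
  have hc : HasFDerivAt (fun y : Eucl n => 2 * g1 a (‖y‖ ^ 2))
      ((2 * g2 a (‖x‖ ^ 2)) • (2 • innerSL ℝ x)) x :=
    ((hasDerivAt_g1 a hs).const_mul 2).comp_hasFDerivAt (f := fun y : Eucl n => ‖y‖ ^ 2) x (hasFDerivAt_nsq x)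
  exact hc.smul (J n).hasFDerivAt

lemma norm_D1_le {n : ℕ} (a : ℝ) (x : Eucl n) :
    ‖g1 a (‖x‖ ^ 2) • (2 • innerSL ℝ x)‖ ≤ |g1 a (‖x‖ ^ 2)| * (2 * ‖x‖) := by
  apply ContinuousLinearMap.opNorm_le_bound _ (by positivity)
  intro v
  have hval : (g1 a (‖x‖ ^ 2) • (2 • innerSL ℝ x)) v
      = g1 a (‖x‖ ^ 2) * (2 * (inner ℝ x v : ℝ)) := by
    simp [two_smul]; ring
  rw [hval, Real.norm_eq_abs, abs_mul, abs_mul]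
  have h1 : |(inner ℝ x v : ℝ)| ≤ ‖x‖ * ‖v‖ := abs_real_inner_le_norm x v
  have h2 : |(2 : ℝ)| = 2 := by norm_num
  rw [h2]
  calc |g1 a (‖x‖ ^ 2)| * (2 * |(inner ℝ x v : ℝ)|)
      ≤ |g1 a (‖x‖ ^ 2)| * (2 * (‖x‖ * ‖v‖)) := by gcongr
    _ = |g1 a (‖x‖ ^ 2)| * (2 * ‖x‖) * ‖v‖ := by ring

lemma norm_D2_le {n : ℕ} (a : ℝ) (x : Eucl n) :
    ‖(2 * g1 a (‖x‖ ^ 2)) • J n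
        + (((2 * g2 a (‖x‖ ^ 2)) • (2 • innerSL ℝ x)).smulRight (J n x))‖
      ≤ 2 * |g1 a (‖x‖ ^ 2)| + 4 * |g2 a (‖x‖ ^ 2)| * ‖x‖ ^ 2 := by
  apply ContinuousLinearMap.opNorm_le_bound _ (by positivity)
  intro v
  have hx : (((2 * g1 a (‖x‖ ^ 2)) • J n
        + (((2 * g2 a (‖x‖ ^ 2)) • (2 • innerSL ℝ x)).smulRight (J n x))) v)
      = (2 * g1 a (‖x‖ ^ 2)) • (J n v)
        + (2 * g2 a (‖x‖ ^ 2) * (2 * (inner ℝ x v : ℝ))) • (J n x) := by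
    simp [two_smul, ContinuousLinearMap.smulRight_apply]
    congr 1
    ring
  rw [hx]
  refine le_trans (norm_add_le _ _) ?_
  have n1 := norm_smul_le (2 * g1 a (‖x‖ ^ 2)) (J n v)
  rw [Real.norm_eq_abs, norm_J_apply] at n1
  have n2 := norm_smul_le (2 * g2 a (‖x‖ ^ 2) * (2 * (inner ℝ x v : ℝ))) (J n x)
  rw [Real.norm_eq_abs, norm_J_apply] at n2
  have h1 : |(inner ℝ x v : ℝ)| ≤ ‖x‖ * ‖v‖ := abs_real_inner_le_norm x v
  rw [abs_mul, abs_two] at n1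
  have h3 : |2 * g2 a (‖x‖ ^ 2) * (2 * (inner ℝ x v : ℝ))|
      ≤ 2 * |g2 a (‖x‖ ^ 2)| * (2 * (‖x‖ * ‖v‖)) := by
    rw [abs_mul, abs_mul, abs_mul, abs_two]
    gcongr
  calc ‖(2 * g1 a (‖x‖ ^ 2)) • (J n v)‖
        + ‖(2 * g2 a (‖x‖ ^ 2) * (2 * (inner ℝ x v : ℝ))) • (J n x)‖
      ≤ 2 * |g1 a (‖x‖ ^ 2)| * ‖v‖
        + 2 * |g2 a (‖x‖ ^ 2)| * (2 * (‖x‖ * ‖v‖)) * ‖x‖ := by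
        refine add_le_add n1 (le_trans n2 ?_)
        exact mul_le_mul_of_nonneg_right h3 (norm_nonneg x)
    _ = (2 * |g1 a (‖x‖ ^ 2)| + 4 * |g2 a (‖x‖ ^ 2)| * ‖x‖ ^ 2) * ‖v‖ := by ring

end ChiAux

open ChiAux in
/-- **Derivative estimates on `χ`.** For fixed `Ã > 0` there is `C > 0` depending only on
`Ã` (in particular independent of `C₁ > 0`) such that on `[t₁,T]×ℝⁿ`, with
`t₁ = max(T − Ã/C₁, 0)`, one has `|Dχ| ≤ Cχψ^{1/2}/(|x|²+1)^{1/2}` and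
`|D²χ| ≤ Cχψ/(|x|²+1)` (operator norm of the Hessian as a bilinear form). -/
theorem chi_derivative_bounds {n : ℕ} (hn : 1 ≤ n) {T : ℝ} (hT : 0 < T) :
    ∀ A > (0 : ℝ), ∃ C > (0 : ℝ), ∀ C₁ > (0 : ℝ),
      ∀ t ∈ Set.Icc (max (T - A / C₁) 0) T, ∀ x : Eucl n,
        ‖gradient (fun y => chiFun T C₁ A t y) x‖
            ≤ C * chiFun T C₁ A t x * (psiFun x) ^ ((1 : ℝ) / 2)
                / ((‖x‖ ^ 2 + 1) ^ ((1 : ℝ) / 2)) ∧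
        ‖iteratedFDeriv ℝ 2 (fun y => chiFun T C₁ A t y) x‖
            ≤ C * chiFun T C₁ A t x * psiFun x / (‖x‖ ^ 2 + 1) := by
  intro A hA
  refine ⟨16 * A ^ 2 + 16 * A, by positivity, ?_⟩
  intro C₁ hC₁ t ht x
  have htT : t ≤ T := ht.2
  have ht1 : T - A / C₁ ≤ t := le_trans (le_max_left _ _) ht.1
  have haA : A ≤ C₁ * (T - t) + A := by
    have : 0 ≤ C₁ * (T - t) := mul_nonneg hC₁.le (by linarith)
    linarith
  have ha2 : C₁ * (T - t) + A ≤ 2 * A := by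
    have h1 : T - t ≤ A / C₁ := by linarith
    have h2 : C₁ * (T - t) ≤ C₁ * (A / C₁) := by gcongr
    have h3 : C₁ * (A / C₁) = A := by field_simp
    nlinarith
  set a : ℝ := C₁ * (T - t) + A with ha_def
  have ha0 : 0 < a := lt_of_lt_of_le hA haA
  have hchi : (fun y : Eucl n => chiFun T C₁ A t y) = fun y : Eucl n => g a (‖y‖ ^ 2) := by
    funext y
    unfold chiFun psiFun ChiAux.g ChiAux.L
    rw [Real.log_rpow (by positivity)]
  have hLeq : L (‖x‖ ^ 2) = Real.log ((‖x‖ ^ 2 + 1) ^ ((1 : ℝ) / 2)) + 1 := by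
    rw [Real.log_rpow (by positivity)]
    unfold L
    ring
  have hpsi : psiFun x = L (‖x‖ ^ 2) ^ 2 := by rw [psiFun, hLeq]
  have hchix : chiFun T C₁ A t x = g a (‖x‖ ^ 2) :=
    congrFun hchi x
  have hL1 : (1 : ℝ) ≤ L (‖x‖ ^ 2) := L_one_le (by positivity)
  have hpsirt : (psiFun x) ^ ((1 : ℝ) / 2) = L (‖x‖ ^ 2) := by
    rw [hpsi, ← Real.sqrt_eq_rpow]
    exact Real.sqrt_sq (by linarith)
  have hurt : ((‖x‖ ^ 2 + 1) : ℝ) ^ ((1 : ℝ) / 2) = Real.sqrt (‖x‖ ^ 2 + 1) := by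
    rw [← Real.sqrt_eq_rpow]
  constructor
  · -- gradient bound
    have hgrad : gradient (fun y => chiFun T C₁ A t y) x
        = (InnerProductSpace.toDual ℝ (Eucl n)).symm
            (fderiv ℝ (fun y => chiFun T C₁ A t y) x) := rfl
    rw [hgrad, LinearIsometryEquiv.norm_map, hchi, (hasFDerivAt_chi a x).fderiv]
    refine le_trans (norm_D1_le a x) ?_
    rw [hchix, hpsirt, hurt]
    exact bound1 hA haA ha2 (norm_nonneg x)
  · -- Hessian bound
    have e2 : ‖iteratedFDeriv ℝ 2 (fun y => chiFun T C₁ A t y) x‖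
        = ‖fderiv ℝ (fderiv ℝ (fun y => chiFun T C₁ A t y)) x‖ := by
      rw [show (2 : ℕ) = 1 + 1 from rfl, ← norm_iteratedFDeriv_fderiv,
        show (1 : ℕ) = 0 + 1 from rfl, ← norm_iteratedFDeriv_fderiv,
        norm_iteratedFDeriv_zero]
    rw [e2, hchi, fderiv_chi_eq, (hasFDerivAt_chi2 a x).fderiv]
    refine le_trans (norm_D2_le a x) ?_
    rw [hchix, hpsi]
    exact bound2 hA haA ha2 (norm_nonneg x)
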